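/- Let s, t be positive real numbers with s/t irrational, let S²_{s,t} = S³_{s,t}/N be the orbit space of the ellipsoid under the componentwise action of N = {(e^{2πisθ}, e^{2πitθ}) : θ ∈ ℝ}, with the quotient topology, and let U_S = {[z:w] ∈ S²_{s,t} : w ≠ 0}. The countable group Γ_{s/t} = {e^{2πiks/t} : k ∈ ℤ} acts on B(t) = {z ∈ ℂ : |z|² < t} by complex multiplication, and the map B(t)/Γ_{s/t} → U_S sending the class [z] to the orbit [z : √(s − (s/t)|z|²)] is well defined and is a homeomorphism, where B(t)/Γ_{s/t} carries the quotient topology and U_S the subspace topology. -/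

import Mathlib

open Complex

/-- `expc x = e^{2πix}`. -/
noncomputable def expc (x : ℝ) : ℂ := Complex.exp (2 * Real.pi * Complex.I * x)

/-- The ellipsoid `S³_{s,t} = {(z,w) ∈ ℂ² : s|z|² + t|w|² = st}`. -/
def ellipsoidR (s t : ℝ) : Set (ℂ × ℂ) :=
  {z | s * ‖z.1‖ ^ 2 + t * ‖z.2‖ ^ 2 = s * t}

/-- Orbit relation of the componentwise action of `N = {(e^{2πisθ}, e^{2πitθ}) : θ ∈ ℝ}`
on the ellipsoid `S³_{s,t}`. -/
noncomputable def orbitRelR (s t : ℝ) (x y : ellipsoidR s t) : Prop :=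
  ∃ θ : ℝ, (y : ℂ × ℂ) = (expc (s * θ) * (x : ℂ × ℂ).1, expc (t * θ) * (x : ℂ × ℂ).2)

/-- The ball `B(t) = {z ∈ ℂ : |z|² < t}`. -/
def ballR (t : ℝ) : Set ℂ := {z | ‖z‖ ^ 2 < t}

/-- Orbit relation of the action of `Γ_{s/t} = {e^{2πiks/t} : k ∈ ℤ}` on `B(t)` by complex
multiplication. -/
noncomputable def ballRelR (s t : ℝ) (x y : ballR t) : Prop :=
  ∃ k : ℤ, (y : ℂ) = expc ((k : ℝ) * (s / t)) * (x : ℂ)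

/-- `U_S = {[z:w] ∈ S²_{s,t} : w ≠ 0}`. -/
noncomputable def USR (s t : ℝ) : Set (Quot (orbitRelR s t)) :=
  {o | ∃ x : ellipsoidR s t, Quot.mk (orbitRelR s t) x = o ∧ (x : ℂ × ℂ).2 ≠ 0}

/-!
The inverse sends `[z : w]` to the class of `e^{2πisθ} z`, where `θ` is any real number with
`e^{2πitθ} w = |w|`. Two such `θ` differ by an element of `ℤ/t`, which changes `e^{2πisθ}` by an
element of `Γ_{s/t}`; hence the class is well defined and constant on `N`-orbits. Near a point with
`w = w₀ ≠ 0` such a `θ` is a continuous function of `w`, given by `arg (w / w₀)`. Finally `U_S` is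
open, its preimage in `S³_{s,t}` being `{w ≠ 0}`, so the orbit map restricted to that preimage is a
quotient map and the inverse descends to a continuous map on `U_S`.
-/

open Topology

lemma expc_add (a b : ℝ) : expc (a + b) = expc a * expc b := by
  simp only [expc, ofReal_add, mul_add, exp_add]

lemma expc_zero : expc 0 = 1 := by simp [expc]

lemma expc_ne_zero (a : ℝ) : expc a ≠ 0 := exp_ne_zero _

lemma norm_expc (a : ℝ) : ‖expc a‖ = 1 := by
  rw [expc, norm_exp]
  simp [mul_comm]

lemma expc_eq_one_iff (x : ℝ) : expc x = 1 ↔ ∃ k : ℤ, x = k := by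
  have h2πI : 2 * (Real.pi : ℂ) * I ≠ 0 := by simp [Real.pi_ne_zero]
  rw [expc, exp_eq_one_iff]
  refine exists_congr fun k => ?_
  rw [mul_comm (k : ℂ), mul_right_inj' h2πI]
  exact_mod_cast Iff.rfl

@[fun_prop]
lemma continuous_expc : Continuous expc := by
  unfold expc
  fun_prop

/-- Measuring the argument relative to `w₀` keeps `w` near `w₀` away from the cut of `arg`. -/
noncomputable def normAngle (w₀ w : ℂ) : ℝ := -(arg (w / w₀) + arg w₀) / (2 * Real.pi)

lemma expc_normAngle_mul {w₀ w : ℂ} (hw₀ : w₀ ≠ 0) :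
    expc (normAngle w₀ w) * w = ‖w‖ := by
  set c : ℂ := ((arg (w / w₀) + arg w₀ : ℝ) : ℂ)
  have hpolar : (‖w‖ : ℂ) * exp (c * I) = w :=
    calc (‖w‖ : ℂ) * exp (c * I)
        = (‖w / w₀‖ * exp (arg (w / w₀) * I)) * (‖w₀‖ * exp (arg w₀ * I)) := by
          simp only [c, norm_div, ofReal_add, ofReal_div, add_mul, exp_add]
          field_simp [norm_ne_zero_iff.mpr hw₀]
      _ = w := by rw [norm_mul_exp_arg_mul_I, norm_mul_exp_arg_mul_I, div_mul_cancel₀ w hw₀]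
  have hexpc : expc (normAngle w₀ w) = exp (-(c * I)) := by
    rw [expc, normAngle]
    congr 1
    simp only [c]
    push_cast
    field_simp [Real.pi_ne_zero]
  calc expc (normAngle w₀ w) * w = exp (-(c * I)) * (‖w‖ * exp (c * I)) := by rw [hexpc, hpolar]
    _ = ‖w‖ := by rw [mul_left_comm, ← exp_add, neg_add_cancel, exp_zero, mul_one]

lemma continuousAt_normAngle {w₀ : ℂ} (hw₀ : w₀ ≠ 0) : ContinuousAt (normAngle w₀) w₀ := by
  have harg : ContinuousAt arg (w₀ / w₀) := by
    rw [div_self hw₀]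
    exact continuousAt_arg one_mem_slitPlane
  have hdiv : ContinuousAt (fun w => arg (w / w₀)) w₀ :=
    ContinuousAt.comp (f := fun w => w / w₀) harg (by fun_prop)
  exact ((hdiv.add continuousAt_const).neg).div_const _

section Chart

variable {s t : ℝ}

lemma expc_mul_mem_ballR {z : ℂ} (hz : z ∈ ballR t) (a : ℝ) : expc a * z ∈ ballR t := by
  simpa [ballR, norm_mul, norm_expc] using hz

lemma sub_pos_of_mem_ballR (hs : 0 < s) (ht : 0 < t) {z : ℂ} (hz : z ∈ ballR t) :
    0 < s - s / t * ‖z‖ ^ 2 := by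
  have h : s / t * ‖z‖ ^ 2 < s / t * t := mul_lt_mul_of_pos_left hz (div_pos hs ht)
  rw [div_mul_cancel₀ _ ht.ne'] at h
  linarith

lemma mem_ballR_of_mem_ellipsoidR (hs : 0 < s) (ht : 0 < t) {p : ℂ × ℂ}
    (hp : p ∈ ellipsoidR s t) (hw : p.2 ≠ 0) : p.1 ∈ ballR t := by
  have : 0 < ‖p.2‖ ^ 2 := by positivity
  change s * ‖p.1‖ ^ 2 + t * ‖p.2‖ ^ 2 = s * t at hp
  change ‖p.1‖ ^ 2 < t
  nlinarith

lemma sqrt_eq_norm_snd_of_mem_ellipsoidR (ht : t ≠ 0) {p : ℂ × ℂ} (hp : p ∈ ellipsoidR s t) :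
    √(s - s / t * ‖p.1‖ ^ 2) = ‖p.2‖ := by
  change s * ‖p.1‖ ^ 2 + t * ‖p.2‖ ^ 2 = s * t at hp
  rw [← Real.sqrt_sq (norm_nonneg p.2)]
  congr 1
  field_simp
  linarith

noncomputable def flowN (s t θ : ℝ) (p : ℂ × ℂ) : ℂ × ℂ :=
  (expc (s * θ) * p.1, expc (t * θ) * p.2)

lemma flowN_zero (p : ℂ × ℂ) : flowN s t 0 p = p := by
  simp [flowN, expc_zero]

lemma flowN_add (θ φ : ℝ) (p : ℂ × ℂ) : flowN s t (θ + φ) p = flowN s t θ (flowN s t φ p) := by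
  simp only [flowN, mul_add, expc_add, mul_assoc]

lemma orbitRelR_iff {x y : ellipsoidR s t} :
    orbitRelR s t x y ↔ ∃ θ, (y : ℂ × ℂ) = flowN s t θ x :=
  Iff.rfl

lemma orbitRelR_equivalence (s t : ℝ) : Equivalence (orbitRelR s t) := by
  refine ⟨fun _ => ⟨0, (flowN_zero _).symm⟩, fun hxy => ?_, fun hxy hyz => ?_⟩
  · obtain ⟨θ, h⟩ := orbitRelR_iff.mp hxy
    exact orbitRelR_iff.mpr ⟨-θ, by rw [h, ← flowN_add, neg_add_cancel, flowN_zero]⟩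
  · obtain ⟨θ, h⟩ := orbitRelR_iff.mp hxy
    obtain ⟨φ, h'⟩ := orbitRelR_iff.mp hyz
    exact orbitRelR_iff.mpr ⟨φ + θ, by rw [h', h, flowN_add]⟩

noncomputable def chartMap (hs : 0 < s) (ht : 0 < t) (z : ballR t) : ellipsoidR s t :=
  ⟨((z : ℂ), (√(s - s / t * ‖(z : ℂ)‖ ^ 2) : ℂ)), by
    change s * _ + t * _ = s * t
    rw [norm_real, Real.norm_of_nonneg (Real.sqrt_nonneg _),
      Real.sq_sqrt (sub_pos_of_mem_ballR hs ht z.2).le]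
    field_simp
    ring⟩

lemma continuous_chartMap (hs : 0 < s) (ht : 0 < t) : Continuous (chartMap hs ht) :=
  Continuous.subtype_mk (by fun_prop) _

lemma chartMap_snd_ne_zero (hs : 0 < s) (ht : 0 < t) (z : ballR t) :
    (chartMap hs ht z : ℂ × ℂ).2 ≠ 0 :=
  ofReal_ne_zero.mpr (Real.sqrt_pos.mpr (sub_pos_of_mem_ballR hs ht z.2)).ne'

lemma chartMap_expc_mul (hs : 0 < s) (ht : 0 < t) (z : ballR t) (a : ℝ) :
    (chartMap hs ht ⟨expc a * z, expc_mul_mem_ballR z.2 a⟩ : ℂ × ℂ) =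
      (expc a * z, (chartMap hs ht z : ℂ × ℂ).2) := by
  simp [chartMap, norm_expc]

lemma orbitRelR_chartMap (hs : 0 < s) (ht : 0 < t) {z z' : ballR t} (h : ballRelR s t z z') :
    orbitRelR s t (chartMap hs ht z) (chartMap hs ht z') := by
  obtain ⟨k, hk⟩ := h
  obtain rfl : z' = ⟨expc (k * (s / t)) * z, expc_mul_mem_ballR z.2 _⟩ := Subtype.ext hk
  refine ⟨k / t, ?_⟩
  have hs' : s * (k / t) = k * (s / t) := by ring
  have ht' : expc (t * (k / t)) = 1 := by
    rw [mul_div_cancel₀ _ ht.ne', expc_eq_one_iff]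
    exact ⟨k, rfl⟩
  rw [chartMap_expc_mul, hs', ht', one_mul]
  rfl

lemma mk_mem_USR_iff {x : ellipsoidR s t} :
    Quot.mk (orbitRelR s t) x ∈ USR s t ↔ (x : ℂ × ℂ).2 ≠ 0 := by
  refine ⟨fun ⟨y, hyx, hy⟩ => ?_, fun hx => ⟨x, rfl, hx⟩⟩
  obtain ⟨θ, hθ⟩ := (orbitRelR_equivalence s t).eqvGen_iff.mp (Quot.eq.mp hyx)
  rw [hθ]
  exact mul_ne_zero (expc_ne_zero _) hy

lemma isOpen_USR : IsOpen (USR s t) := by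
  rw [← isQuotientMap_quot_mk.isOpen_preimage]
  have : Quot.mk (orbitRelR s t) ⁻¹' USR s t = {x : ellipsoidR s t | (x : ℂ × ℂ).2 ≠ 0} :=
    Set.ext fun _ => mk_mem_USR_iff
  rw [this]
  exact isOpen_ne_fun (by fun_prop) continuous_const

noncomputable def chartQuot (hs : 0 < s) (ht : 0 < t) : Quot (ballRelR s t) → USR s t :=
  Quot.lift
    (fun z => ⟨Quot.mk _ (chartMap hs ht z), mk_mem_USR_iff.mpr (chartMap_snd_ne_zero hs ht z)⟩)
    fun _ _ h => Subtype.ext (Quot.sound (orbitRelR_chartMap hs ht h))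

lemma continuous_chartQuot (hs : 0 < s) (ht : 0 < t) : Continuous (chartQuot hs ht) :=
  continuous_quot_lift _ ((continuous_quot_mk.comp (continuous_chartMap hs ht)).subtype_mk _)

abbrev ellipsoidUS (s t : ℝ) : Set (ellipsoidR s t) := Quot.mk (orbitRelR s t) ⁻¹' USR s t

noncomputable def quotUS (s t : ℝ) : C(ellipsoidUS s t, USR s t) :=
  ⟨(USR s t).restrictPreimage (Quot.mk _), continuous_quot_mk.restrictPreimage⟩

lemma isQuotientMap_quotUS : IsQuotientMap (quotUS s t) :=
  isQuotientMap_quot_mk.restrictPreimage_isOpen isOpen_USR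

noncomputable def ballClass (s θ : ℝ) (z : ballR t) : Quot (ballRelR s t) :=
  Quot.mk _ ⟨expc (s * θ) * z, expc_mul_mem_ballR z.2 _⟩

lemma continuous_ballClass : Continuous fun p : ℝ × ballR t => ballClass s p.1 p.2 :=
  continuous_quot_mk.comp (Continuous.subtype_mk (by fun_prop) _)

lemma ballClass_expc_mul (θ φ : ℝ) (z : ballR t) :
    ballClass s θ ⟨expc (s * φ) * z, expc_mul_mem_ballR z.2 _⟩ = ballClass s (θ + φ) z := by
  simp only [ballClass, mul_add, expc_add, mul_assoc]

/-- `θ₂ - θ₁ ∈ ℤ/t`, so `sθ₂ - sθ₁ ∈ ℤ s/t`. -/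
lemma ballClass_eq_of_expc_eq (ht : t ≠ 0) {θ₁ θ₂ : ℝ} (h : expc (t * θ₁) = expc (t * θ₂))
    (z : ballR t) : ballClass s θ₁ z = ballClass s θ₂ z := by
  obtain ⟨k, hk⟩ : ∃ k : ℤ, t * θ₂ - t * θ₁ = k := by
    rw [← expc_eq_one_iff]
    have h' := expc_add (t * θ₂ - t * θ₁) (t * θ₁)
    rw [sub_add_cancel, ← h] at h'
    exact mul_right_cancel₀ (expc_ne_zero _) ((one_mul _).trans h').symm
  refine Quot.sound ⟨k, ?_⟩
  change expc (s * θ₂) * z = expc (k * (s / t)) * (expc (s * θ₁) * z)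
  rw [← mul_assoc, ← expc_add, ← hk]
  congr 2
  field_simp
  ring

def ballPoint (hs : 0 < s) (ht : 0 < t) (x : ellipsoidUS s t) : ballR t :=
  ⟨(x.1 : ℂ × ℂ).1, mem_ballR_of_mem_ellipsoidR hs ht x.1.2 (mk_mem_USR_iff.mp x.2)⟩

lemma continuous_ballPoint (hs : 0 < s) (ht : 0 < t) : Continuous (ballPoint hs ht) :=
  Continuous.subtype_mk (by fun_prop) _

noncomputable def invChart (hs : 0 < s) (ht : 0 < t) (x : ellipsoidUS s t) :
    Quot (ballRelR s t) :=
  ballClass s (normAngle 1 (x.1 : ℂ × ℂ).2 / t) (ballPoint hs ht x)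

lemma expc_mul_normAngle_div_mul (ht : t ≠ 0) {w₀ : ℂ} (hw₀ : w₀ ≠ 0) (w : ℂ) :
    expc (t * (normAngle w₀ w / t)) * w = ‖w‖ := by
  rw [mul_div_cancel₀ _ ht]
  exact expc_normAngle_mul hw₀

lemma invChart_eq_ballClass (hs : 0 < s) (ht : 0 < t) (x : ellipsoidUS s t) {θ : ℝ}
    (hθ : expc (t * θ) * (x.1 : ℂ × ℂ).2 = ‖(x.1 : ℂ × ℂ).2‖) :
    invChart hs ht x = ballClass s θ (ballPoint hs ht x) :=
  ballClass_eq_of_expc_eq ht.ne' (mul_right_cancel₀ (mk_mem_USR_iff.mp x.2)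
    ((expc_mul_normAngle_div_mul ht.ne' one_ne_zero _).trans hθ.symm)) _

lemma continuous_invChart (hs : 0 < s) (ht : 0 < t) : Continuous (invChart hs ht) := by
  refine continuous_iff_continuousAt.mpr fun x₀ => ?_
  have hw₀ : (x₀.1 : ℂ × ℂ).2 ≠ 0 := mk_mem_USR_iff.mp x₀.2
  set θ := fun x : ellipsoidUS s t => normAngle (x₀.1 : ℂ × ℂ).2 (x.1 : ℂ × ℂ).2 / t
  have hθ : ContinuousAt θ x₀ :=
    (ContinuousAt.comp (f := fun x : ellipsoidUS s t => (x.1 : ℂ × ℂ).2)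
      (continuousAt_normAngle hw₀) (by fun_prop)).div_const t
  have h : invChart hs ht = fun x => ballClass s (θ x) (ballPoint hs ht x) :=
    funext fun x => invChart_eq_ballClass hs ht x (expc_mul_normAngle_div_mul ht.ne' hw₀ _)
  rw [h]
  exact continuous_ballClass.continuousAt.comp (f := fun x => (θ x, ballPoint hs ht x))
    (hθ.prodMk (continuous_ballPoint hs ht).continuousAt)

lemma invChart_factorsThrough (hs : 0 < s) (ht : 0 < t) :
    Function.FactorsThrough (invChart hs ht) (quotUS s t) := by
  intro x y hxy
  obtain ⟨φ, hφ⟩ :=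
    (orbitRelR_equivalence s t).eqvGen_iff.mp (Quot.eq.mp (congrArg Subtype.val hxy))
  set θ := normAngle 1 (y.1 : ℂ × ℂ).2 / t
  have hθφ : expc (t * (θ + φ)) * (x.1 : ℂ × ℂ).2 = ‖(x.1 : ℂ × ℂ).2‖ := by
    have hw : (y.1 : ℂ × ℂ).2 = expc (t * φ) * (x.1 : ℂ × ℂ).2 := congrArg Prod.snd hφ
    calc expc (t * (θ + φ)) * (x.1 : ℂ × ℂ).2 = expc (t * θ) * (y.1 : ℂ × ℂ).2 := by
          rw [hw, mul_add, expc_add, mul_assoc]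
      _ = ‖(y.1 : ℂ × ℂ).2‖ := expc_mul_normAngle_div_mul ht.ne' one_ne_zero _
      _ = ‖(x.1 : ℂ × ℂ).2‖ := by rw [hw, norm_mul, norm_expc, one_mul]
  have hz : ballPoint hs ht y =
      ⟨expc (s * φ) * ballPoint hs ht x, expc_mul_mem_ballR (ballPoint hs ht x).2 _⟩ :=
    Subtype.ext (congrArg Prod.fst hφ)
  rw [invChart_eq_ballClass hs ht x hθφ, invChart, hz, ballClass_expc_mul]

noncomputable def invQuot (hs : 0 < s) (ht : 0 < t) : C(USR s t, Quot (ballRelR s t)) :=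
  isQuotientMap_quotUS.lift ⟨invChart hs ht, continuous_invChart hs ht⟩
    (invChart_factorsThrough hs ht)

lemma invQuot_quotUS (hs : 0 < s) (ht : 0 < t) (x : ellipsoidUS s t) :
    invQuot hs ht (quotUS s t x) = invChart hs ht x :=
  DFunLike.congr_fun (isQuotientMap_quotUS.lift_comp
    ⟨invChart hs ht, continuous_invChart hs ht⟩ (invChart_factorsThrough hs ht)) x

lemma invQuot_chartQuot (hs : 0 < s) (ht : 0 < t) (q : Quot (ballRelR s t)) :
    invQuot hs ht (chartQuot hs ht q) = q := by
  induction q using Quot.ind with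
  | mk z =>
    have hθ : expc (t * 0) * (chartMap hs ht z : ℂ × ℂ).2 = ‖(chartMap hs ht z : ℂ × ℂ).2‖ := by
      simp [chartMap, expc_zero, Real.norm_of_nonneg (Real.sqrt_nonneg _)]
    let x : ellipsoidUS s t :=
      ⟨chartMap hs ht z, mk_mem_USR_iff.mpr (chartMap_snd_ne_zero hs ht z)⟩
    change invQuot hs ht (quotUS s t x) = _
    rw [invQuot_quotUS, invChart_eq_ballClass hs ht x hθ]
    simp [ballClass, ballPoint, x, chartMap, expc_zero]

lemma chartQuot_invQuot (hs : 0 < s) (ht : 0 < t) (o : USR s t) :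
    chartQuot hs ht (invQuot hs ht o) = o := by
  obtain ⟨x, rfl⟩ := isQuotientMap_quotUS.surjective o
  rw [invQuot_quotUS]
  refine Subtype.ext (Quot.sound ((orbitRelR_equivalence s t).symm
    ⟨normAngle 1 (x.1 : ℂ × ℂ).2 / t, ?_⟩))
  rw [chartMap_expc_mul, expc_mul_normAngle_div_mul ht.ne' one_ne_zero]
  exact Prod.ext rfl (congrArg ofReal (sqrt_eq_norm_snd_of_mem_ellipsoidR ht.ne' x.1.2))

noncomputable def chartHomeomorph (hs : 0 < s) (ht : 0 < t) :
    Quot (ballRelR s t) ≃ₜ USR s t where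
  toFun := chartQuot hs ht
  invFun := invQuot hs ht
  left_inv := invQuot_chartQuot hs ht
  right_inv := chartQuot_invQuot hs ht
  continuous_toFun := continuous_chartQuot hs ht
  continuous_invFun := (invQuot hs ht).continuous

end Chart

theorem quasisphere_chart_S_general (s t : ℝ) (hs : 0 < s) (ht : 0 < t) :
    (∀ z : ℂ, z ∈ ballR t → ∀ k : ℤ, expc ((k : ℝ) * (s / t)) * z ∈ ballR t) ∧
    ∃ h : Quot (ballRelR s t) ≃ₜ USR s t,
      ∀ (z : ℂ) (hz : z ∈ ballR t) (x : ellipsoidR s t),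
        (x : ℂ × ℂ) = (z, (Real.sqrt (s - s / t * ‖z‖ ^ 2) : ℂ)) →
          (h (Quot.mk (ballRelR s t) ⟨z, hz⟩) : Quot (orbitRelR s t)) =
            Quot.mk (orbitRelR s t) x :=
  ⟨fun _ hz _ => expc_mul_mem_ballR hz _, chartHomeomorph hs ht,
    fun _ _ _ hx => congrArg (Quot.mk _) (Subtype.ext hx.symm)⟩

/-- For `s, t > 0` with `s/t` irrational, the countable group `Γ_{s/t}` acts on `B(t)` by
complex multiplication, and the map `B(t)/Γ_{s/t} → U_S`, `[z] ↦ [z : √(s − (s/t)|z|²)]`,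
is well defined and a homeomorphism (quotient topology on the source, subspace topology
from the quotient topology on the target). -/
theorem quasisphere_chart_S (s t : ℝ) (hs : 0 < s) (ht : 0 < t)
    (hst : Irrational (s / t)) :
    (∀ z : ℂ, z ∈ ballR t → ∀ k : ℤ, expc ((k : ℝ) * (s / t)) * z ∈ ballR t) ∧
    ∃ h : Quot (ballRelR s t) ≃ₜ USR s t,
      ∀ (z : ℂ) (hz : z ∈ ballR t) (x : ellipsoidR s t),
        (x : ℂ × ℂ) = (z, (Real.sqrt (s - s / t * ‖z‖ ^ 2) : ℂ)) →
          (h (Quot.mk (ballRelR s t) ⟨z, hz⟩) : Quot (orbitRelR s t)) =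
            Quot.mk (orbitRelR s t) x :=
  quasisphere_chart_S_general s t hs ht
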